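/- arXiv:2002.06593 — 10 statements merged into one kernel-verified Lean document; each statement's English description precedes it below -/
import Mathlib

section
/- For parameters a = b = 1, the set of stationary points of the CDK polynomial vector field, i.e. the zero set { (x,y) ∈ ℝ² : f_{1,1}(x,y) = (0,0) }, is exactly the circle { (x,y) : x² + (y − 1/2)² = 1/4 }. -/
/-- The CDK polynomial vector field. -/
def cdk (a b : ℝ) : ℝ × ℝ → ℝ × ℝ := fun p =>
  (p.1 * p.2 - a * (p.1 ^ 3 + p.1 * p.2 ^ 2),
   p.2 ^ 2 - (b * p.2 - b + 1) * (p.1 ^ 2 + p.2 ^ 2))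

/-! For `a = b = 1` the field is radial: `f(p) = (y - (x² + y²)) • p`. It therefore vanishes
exactly where `x² + y² = y`, a circle that passes through the origin, so the extra zero `p = 0`
of the factor `p` lies on it as well. -/

lemma cdk_one_one_eq_smul (p : ℝ × ℝ) :
    cdk 1 1 p = (p.2 - (p.1 ^ 2 + p.2 ^ 2)) • p := by
  ext <;> simp only [cdk, Prod.smul_fst, Prod.smul_snd, smul_eq_mul] <;> ring

lemma cdk_one_one_eq_zero_iff (p : ℝ × ℝ) :
    cdk 1 1 p = 0 ↔ p.1 ^ 2 + p.2 ^ 2 = p.2 := by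
  rw [cdk_one_one_eq_smul, smul_eq_zero, sub_eq_zero, eq_comm]
  constructor
  · rintro (h | rfl)
    · exact h
    · simp
  · exact Or.inl

lemma sq_add_sub_half_sq_eq_quarter_iff (x y : ℝ) :
    x ^ 2 + (y - 1 / 2) ^ 2 = 1 / 4 ↔ x ^ 2 + y ^ 2 = y := by
  constructor <;> intro h <;> linear_combination h

/-- for `a = b = 1` the stationary points of the CDK polynomial
vector field are exactly the points of the circle `x² + (y − 1/2)² = 1/4`. -/
theorem cdk_stationary_points_a_eq_one_b_eq_one :
    {p : ℝ × ℝ | cdk 1 1 p = (0, 0)}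
      = {p : ℝ × ℝ | p.1 ^ 2 + (p.2 - 1 / 2) ^ 2 = 1 / 4} := by
  ext p
  exact (cdk_one_one_eq_zero_iff p).trans (sq_add_sub_half_sq_eq_quarter_iff p.1 p.2).symm
end

section
/- Let a, b > 0 satisfy either (b > 1 and a < 1) or (b < 1 and a > 1), and set y₂ = −(b − 1)/(a − b). Then y₂/a − y₂² > 0, and the zero set of the CDK polynomial vector field f_{a,b} consists of exactly the four points s₁ = (0,0), s₂ = (0,1), s₃ = (√(y₂/a − y₂²), y₂) and s₄ = (−√(y₂/a − y₂²), y₂). -/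
/-!
The first component of `cdk a b (x, y)` is `x * (y - a (x² + y²))`. On the axis `x = 0` the second
component is `b y² (1 - y)`, giving `s₁` and `s₂`. Off the axis the point lies on the circle
`a (x² + y²) = y`, and substituting this into `a` times the second component leaves
`y ((a - b) y - (1 - b))`, so `y = y₂`; the circle meets this horizontal line in `s₃` and `s₄`
exactly when `y₂ / a - y₂² = b (1 - b) (a - 1) / (a (a - b)²)` is positive.
-/

theorem cdk_eq_zero_iff {a b x y : ℝ} (ha : a ≠ 0) (hb : b ≠ 0) :
    cdk a b (x, y) = (0, 0) ↔
      x = 0 ∧ (y = 0 ∨ y = 1) ∨ a * (x ^ 2 + y ^ 2) = y ∧ (a - b) * y = 1 - b := by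
  simp only [cdk, Prod.mk.injEq]
  constructor
  · rintro ⟨h₁, h₂⟩
    by_cases hx : x = 0
    · subst hx
      have haxis : b * (y ^ 2 * (1 - y)) = 0 := by linear_combination h₂
      rcases mul_eq_zero.1 ((mul_eq_zero.1 haxis).resolve_left hb) with hy | hy
      · exact Or.inl ⟨rfl, Or.inl (pow_eq_zero_iff two_ne_zero |>.1 hy)⟩
      · exact Or.inl ⟨rfl, Or.inr (by linarith)⟩
    · have hcircle : a * (x ^ 2 + y ^ 2) = y := by
        have h : x * (y - a * (x ^ 2 + y ^ 2)) = 0 := by linear_combination h₁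
        linear_combination -(mul_eq_zero.1 h).resolve_left hx
      have hy : y ≠ 0 := by
        rintro rfl
        exact hx (pow_eq_zero_iff two_ne_zero |>.1 (by simpa [ha] using hcircle))
      have hline : y * ((a - b) * y - (1 - b)) = 0 := by
        linear_combination a * h₂ + (b * y - b + 1) * hcircle
      exact Or.inr ⟨hcircle, by linear_combination (mul_eq_zero.1 hline).resolve_left hy⟩
  · rintro (⟨rfl, rfl | rfl⟩ | ⟨hcircle, hline⟩)
    · norm_num
    · norm_num
    · refine ⟨by linear_combination (-x) * hcircle, mul_left_cancel₀ ha ?_⟩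
      linear_combination y * hline - (b * y - b + 1) * hcircle

theorem mul_sq_add_sq_eq_iff {a x y : ℝ} (ha : a ≠ 0) (hr : 0 ≤ y / a - y ^ 2) :
    a * (x ^ 2 + y ^ 2) = y ↔ x = √(y / a - y ^ 2) ∨ x = -√(y / a - y ^ 2) := by
  rw [← sq_eq_sq_iff_eq_or_eq_neg, Real.sq_sqrt hr, eq_sub_iff_add_eq, eq_div_iff ha, mul_comm]

theorem cdk_offAxis_sq_pos {a b : ℝ} (ha : 0 < a) (hb : 0 < b)
    (hab : (1 < b ∧ a < 1) ∨ (b < 1 ∧ 1 < a)) :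
    0 < (1 - b) / (a - b) / a - ((1 - b) / (a - b)) ^ 2 := by
  have hab' : a - b ≠ 0 := by rcases hab with ⟨_, _⟩ | ⟨_, _⟩ <;> linarith
  have hsign : 0 < (1 - b) * (a - 1) := by rcases hab with ⟨_, _⟩ | ⟨_, _⟩ <;> nlinarith
  calc (0 : ℝ) < b * ((1 - b) * (a - 1)) / (a * (a - b) ^ 2) := by positivity
    _ = _ := by field_simp; ring

/-- for `b > 1 > a` or `b < 1 < a` the CDK polynomial vector field
has exactly four stationary points `s₁, s₂, s₃, s₄`. -/
theorem cdk_stationary_points_four (a b : ℝ) (ha : 0 < a) (hb : 0 < b)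
    (hab : (1 < b ∧ a < 1) ∨ (b < 1 ∧ 1 < a)) :
    let y₂ : ℝ := -(b - 1) / (a - b)
    y₂ / a - y₂ ^ 2 > 0 ∧
      {p : ℝ × ℝ | cdk a b p = (0, 0)}
        = {((0 : ℝ), (0 : ℝ)), ((0 : ℝ), (1 : ℝ)),
           (Real.sqrt (y₂ / a - y₂ ^ 2), y₂), (-Real.sqrt (y₂ / a - y₂ ^ 2), y₂)} := by
  intro y₂
  have hab' : a - b ≠ 0 := by rcases hab with ⟨_, _⟩ | ⟨_, _⟩ <;> linarith
  have hpos : y₂ / a - y₂ ^ 2 > 0 := by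
    simpa only [y₂, neg_sub] using cdk_offAxis_sq_pos ha hb hab
  refine ⟨hpos, Set.ext fun ⟨x, y⟩ => ?_⟩
  have hline : (a - b) * y = 1 - b ↔ y = y₂ := by
    rw [eq_div_iff hab', neg_sub, mul_comm]
  have hcircle : a * (x ^ 2 + y ^ 2) = y ∧ y = y₂ ↔
      (x = √(y₂ / a - y₂ ^ 2) ∨ x = -√(y₂ / a - y₂ ^ 2)) ∧ y = y₂ :=
    and_congr_left fun hy => by rw [hy]; exact mul_sq_add_sq_eq_iff ha.ne' hpos.le
  simp only [Set.mem_ofPred_eq, Set.mem_insert_iff, Set.mem_singleton_iff, Prod.mk.injEq,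
    cdk_eq_zero_iff ha.ne' hb.ne', hline, hcircle]
  tauto
end

section
/- Let a, b > 0 be such that it is not the case that a = 1 and b = 1, and such that neither (b > 1 and a < 1) nor (b < 1 and a > 1) holds. Then the zero set of the CDK polynomial vector field f_{a,b} consists of exactly the two points s₁ = (0,0) and s₂ = (0,1). -/
theorem cdk_zero_left_eq_zero_iff {a b : ℝ} (hb : b ≠ 0) (y : ℝ) :
    cdk a b (0, y) = (0, 0) ↔ y = 0 ∨ y = 1 := by
  have hcdk : cdk a b (0, y) = (0, b * y ^ 2 * (1 - y)) := by
    simp only [cdk, Prod.mk.injEq]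
    constructor <;> ring
  rw [hcdk, Prod.mk.injEq, mul_eq_zero, mul_eq_zero, pow_eq_zero_iff two_ne_zero, sub_eq_zero]
  simp only [true_and, hb, false_or, eq_comm (a := (1 : ℝ))]

theorem mem_Ioo_and_sub_one_mul_eq_of_cdk_eq_zero {a b x y : ℝ} (ha : 0 < a) (hb : 0 < b)
    (hx : x ≠ 0) (h : cdk a b (x, y) = (0, 0)) :
    y ∈ Set.Ioo 0 1 ∧ (a - 1) * y = (1 - b) * (1 - y) := by
  simp only [cdk, Prod.mk.injEq] at h
  obtain ⟨h₁, h₂⟩ := h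
  have hx2 : 0 < x ^ 2 := by positivity
  have hr : 0 < x ^ 2 + y ^ 2 := by positivity
  have hy : y = a * (x ^ 2 + y ^ 2) := by
    have : x * (y - a * (x ^ 2 + y ^ 2)) = 0 := by linear_combination h₁
    linear_combination (mul_eq_zero.mp this).resolve_left hx
  have hy_pos : 0 < y := hy ▸ mul_pos ha hr
  have hay : a * y < 1 := by
    have : y * (1 - a * y) = a * x ^ 2 := by linear_combination hy
    nlinarith [mul_pos ha hx2]
  have hline : a * y = b * y - b + 1 := by
    have : y * (a * y - (b * y - b + 1)) = 0 := by
      linear_combination a * h₂ - (b * y - b + 1) * hy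
    linear_combination (mul_eq_zero.mp this).resolve_left hy_pos.ne'
  exact ⟨⟨hy_pos, by nlinarith⟩, by linear_combination hline⟩

theorem eq_one_or_of_sub_one_mul_eq {a b y : ℝ} (hy : y ∈ Set.Ioo 0 1)
    (h : (a - 1) * y = (1 - b) * (1 - y)) :
    (a = 1 ∧ b = 1) ∨ (1 < b ∧ a < 1) ∨ (b < 1 ∧ 1 < a) := by
  obtain ⟨hy₀, hy₁⟩ := hy
  rcases lt_trichotomy b 1 with hb | rfl | hb
  · exact Or.inr <| Or.inr ⟨hb, by nlinarith [mul_pos (sub_pos.2 hb) (sub_pos.2 hy₁)]⟩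
  · simp only [sub_self, zero_mul, mul_eq_zero, hy₀.ne', or_false, sub_eq_zero] at h
    exact Or.inl ⟨h, rfl⟩
  · exact Or.inr <| Or.inl ⟨hb, by nlinarith [mul_pos (sub_pos.2 hb) (sub_pos.2 hy₁)]⟩

/-- in all remaining cases of positive parameters
(neither `a = b = 1`, nor `b > 1 > a`, nor `b < 1 < a`) the CDK polynomial
vector field has exactly the two stationary points `(0,0)` and `(0,1)`. -/
theorem cdk_stationary_points_two (a b : ℝ) (ha : 0 < a) (hb : 0 < b)
    (hone : ¬ (a = 1 ∧ b = 1))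
    (hcase : ¬ ((1 < b ∧ a < 1) ∨ (b < 1 ∧ 1 < a))) :
    {p : ℝ × ℝ | cdk a b p = (0, 0)} = {((0 : ℝ), (0 : ℝ)), ((0 : ℝ), (1 : ℝ))} := by
  ext ⟨x, y⟩
  simp only [Set.mem_ofPred_eq, Set.mem_insert_iff, Set.mem_singleton_iff, Prod.mk.injEq]
  by_cases hx : x = 0
  · subst hx
    simpa only [true_and] using cdk_zero_left_eq_zero_iff hb.ne' y
  · simp only [hx, false_and, or_self, iff_false]
    intro h
    obtain ⟨hy, hline⟩ := mem_Ioo_and_sub_one_mul_eq_of_cdk_eq_zero ha hb hx h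
    exact (eq_one_or_of_sub_one_mul_eq hy hline).elim hone hcase
end

section
/- Let a, b > 0 with b ≠ 1 and a ≠ b. Then the real number −(b − 1)²/(a − b)² − (b − 1)/(a(a − b)) is strictly positive if and only if either (b > 1 and a < 1) or (b < 1 and a > 1). (This expression is the value of x² at any stationary point of the CDK system with x ≠ 0.) -/
/-! Over the common denominator `a (a - b)²`, which is positive, the expression has numerator
`b (b - 1) (1 - a)`, so for `b > 0` its sign is that of `(b - 1) (1 - a)`. -/

theorem sub_one_mul_one_sub_pos_iff {R : Type*} [Ring R] [LinearOrder R] [IsStrictOrderedRing R]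
    (a b : R) : 0 < (b - 1) * (1 - a) ↔ (1 < b ∧ a < 1) ∨ (b < 1 ∧ 1 < a) := by
  rw [mul_pos_iff, sub_pos, sub_pos, sub_neg, sub_neg]

theorem cdk_xsquare_eq {a b : ℝ} (ha : a ≠ 0) (hab : a ≠ b) :
    -(b - 1) ^ 2 / (a - b) ^ 2 - (b - 1) / (a * (a - b)) =
      b * ((b - 1) * (1 - a)) / (a * (a - b) ^ 2) := by
  have : a - b ≠ 0 := sub_ne_zero.mpr hab
  field_simp
  ring

theorem cdk_xsquare_positive_iff_general (a b : ℝ) (ha : 0 < a) (hb : 0 < b) :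
    0 < -(b - 1) ^ 2 / (a - b) ^ 2 - (b - 1) / (a * (a - b)) ↔
      (1 < b ∧ a < 1) ∨ (b < 1 ∧ 1 < a) := by
  rcases eq_or_ne a b with rfl | hab
  · -- with `a = b` both fractions divide by `0`, so the left side is `0 < 0`
    refine iff_of_false (by simp) ?_
    rintro (⟨h₁, h₂⟩ | ⟨h₁, h₂⟩) <;> linarith
  · have hden : 0 < a * (a - b) ^ 2 := by
      have : a - b ≠ 0 := sub_ne_zero.mpr hab
      positivity
    rw [cdk_xsquare_eq ha.ne' hab, div_pos_iff_of_pos_right hden, mul_pos_iff_of_pos_left hb,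
      sub_one_mul_one_sub_pos_iff]

/-- for positive parameters with `b ≠ 1` and `a ≠ b`, the value of
`x²` at a stationary point with `x ≠ 0` is strictly positive if and only if
`b > 1 > a` or `b < 1 < a`. -/
theorem cdk_xsquare_positive_iff (a b : ℝ) (ha : 0 < a) (hb : 0 < b)
    (hb1 : b ≠ 1) (hab : a ≠ b) :
    0 < -(b - 1) ^ 2 / (a - b) ^ 2 - (b - 1) / (a * (a - b)) ↔
      (1 < b ∧ a < 1) ∨ (b < 1 ∧ 1 < a) :=
  cdk_xsquare_positive_iff_general a b ha hb
end

section
/- Let a, b > 0 satisfy either (b > 1 and a < 1) or (a > 1 and b < 1), set y₂ = −(b − 1)/(a − b) and let x_k be either of the two values ±√(y₂/a − y₂²). Then the Jacobian matrix J of the CDK polynomial vector field f_{a,b} at the stationary point (x_k, y₂) has trace tr J = b(1 − b)/(a(b − a)) and determinant det J = 2b(b − 1)²(1 − a)/(a(b − a)²), independently of the choice of sign of x_k; in particular the Jacobian matrices at s₃ and s₄ have the same characteristic polynomial. -/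
/-- The Jacobian matrix of a planar vector field at a point, expressed via the
total (Fréchet) derivative applied to the standard basis vectors. -/
noncomputable def jacobianAt (f : ℝ × ℝ → ℝ × ℝ) (p : ℝ × ℝ) : Matrix (Fin 2) (Fin 2) ℝ :=
  !![(fderiv ℝ f p (1, 0)).1, (fderiv ℝ f p (0, 1)).1;
     (fderiv ℝ f p (1, 0)).2, (fderiv ℝ f p (0, 1)).2]

/-!
At a stationary point `(x, y)` with `x ≠ 0` the first component of `cdk a b` gives
`a (x² + y²) = y`, and then the second one gives `a y = b y - b + 1`. On these two curves the
Jacobian entries collapse: the trace is `-b (x² + y²) = -b y / a` and the determinant is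
`2 (b - a) x² y`. Both depend on `x` only through `x²`, so they agree at `s₃` and `s₄`, and
substituting `y₂ = (1 - b) / (a - b)` and `x² = y₂ / a - y₂²` gives the stated values.
-/

theorem jacobianAt_cdk (a b x y : ℝ) :
    jacobianAt (cdk a b) (x, y) =
      !![y - a * (3 * x ^ 2 + y ^ 2), x - 2 * a * x * y;
         -2 * x * (b * y - b + 1), 2 * y - b * (x ^ 2 + y ^ 2) - 2 * y * (b * y - b + 1)] := by
  have hfst := hasFDerivAt_fst (𝕜 := ℝ) (p := (x, y))
  have hsnd := hasFDerivAt_snd (𝕜 := ℝ) (p := (x, y))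
  have hderiv : HasFDerivAt (cdk a b) _ (x, y) :=
    ((hfst.mul hsnd).sub (((hfst.pow 3).add (hfst.mul (hsnd.pow 2))).const_mul a)).prodMk
      ((hsnd.pow 2).sub ((((hsnd.const_mul b).sub_const b).add_const 1).mul
        ((hfst.pow 2).add (hsnd.pow 2))))
  rw [jacobianAt, hderiv.fderiv]
  ext i j
  fin_cases i <;> fin_cases j <;>
    simp only [ContinuousLinearMap.prod_apply, sub_apply, add_apply, smul_apply,
      ContinuousLinearMap.coe_fst', ContinuousLinearMap.coe_snd', smul_eq_mul, nsmul_eq_mul,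
      Matrix.of_apply, Matrix.cons_val', Matrix.cons_val_zero, Matrix.cons_val_one,
      Matrix.cons_val_fin_one, Fin.zero_eta, Fin.mk_one, Fin.isValue] <;>
    ring

section StationaryLocus

variable {a b x y : ℝ}

theorem trace_jacobianAt_cdk (hcirc : a * (x ^ 2 + y ^ 2) = y) (hline : a * y = b * y - b + 1) :
    (jacobianAt (cdk a b) (x, y)).trace = -b * (x ^ 2 + y ^ 2) := by
  rw [jacobianAt_cdk, Matrix.trace_fin_two_of]
  linear_combination (-3 : ℝ) * hcirc + 2 * y * hline

theorem det_jacobianAt_cdk (hcirc : a * (x ^ 2 + y ^ 2) = y) (hline : a * y = b * y - b + 1) :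
    (jacobianAt (cdk a b) (x, y)).det = 2 * (b - a) * x ^ 2 * y := by
  rw [jacobianAt_cdk, Matrix.det_fin_two_of]
  linear_combination
    (2 * b * x ^ 2 - (2 * y - b * (x ^ 2 + y ^ 2) - 2 * y * (b * y - b + 1))) * hcirc -
      2 * x ^ 2 * hline

end StationaryLocus

theorem cdk_s34_radicand_nonneg {a b y₂ : ℝ} (ha : 0 < a) (hb : 0 < b)
    (hab : (1 < b ∧ a < 1) ∨ (1 < a ∧ b < 1)) (hy₂ : y₂ = -(b - 1) / (a - b)) :
    0 ≤ y₂ / a - y₂ ^ 2 := by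
  have hab0 : a - b ≠ 0 := by rcases hab with ⟨h1, h2⟩ | ⟨h1, h2⟩ <;> linarith
  have hrad : y₂ / a - y₂ ^ 2 = b * ((1 - b) * (a - 1)) / (a * (a - b) ^ 2) := by
    rw [hy₂]; field_simp; ring
  have hnum : 0 ≤ (1 - b) * (a - 1) := by
    rcases hab with ⟨h1, h2⟩ | ⟨h1, h2⟩ <;> nlinarith
  rw [hrad]
  exact div_nonneg (mul_nonneg hb.le hnum) (by positivity)

/-- for `b > 1 > a` or `a > 1 > b`, the Jacobian of the CDK
polynomial vector field at `s₃` and `s₄` has trace `b(1-b)/(a(b-a))` and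
determinant `2b(b-1)²(1-a)/(a(b-a)²)`, independently of the sign of `x_k`. -/
theorem cdk_jacobian_s34_trace_det (a b : ℝ) (ha : 0 < a) (hb : 0 < b)
    (hab : (1 < b ∧ a < 1) ∨ (1 < a ∧ b < 1))
    (y₂ : ℝ) (hy₂ : y₂ = -(b - 1) / (a - b)) (xk : ℝ)
    (hxk : xk = Real.sqrt (y₂ / a - y₂ ^ 2) ∨ xk = -Real.sqrt (y₂ / a - y₂ ^ 2)) :
    (jacobianAt (cdk a b) (xk, y₂)).trace = b * (1 - b) / (a * (b - a)) ∧
    (jacobianAt (cdk a b) (xk, y₂)).det = 2 * b * (b - 1) ^ 2 * (1 - a) / (a * (b - a) ^ 2) := by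
  have hab0 : a - b ≠ 0 := by rcases hab with ⟨h1, h2⟩ | ⟨h1, h2⟩ <;> linarith
  have hba0 : b - a ≠ 0 := fun h => hab0 (by linarith)
  have hxk_sq : xk ^ 2 = y₂ / a - y₂ ^ 2 := by
    have hrad : 0 ≤ y₂ / a - y₂ ^ 2 := cdk_s34_radicand_nonneg ha hb hab hy₂
    rcases hxk with rfl | rfl <;> simp [Real.sq_sqrt hrad]
  have hcirc : a * (xk ^ 2 + y₂ ^ 2) = y₂ := by
    rw [hxk_sq]; field_simp; ring
  have hline : a * y₂ = b * y₂ - b + 1 := by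
    rw [hy₂]; field_simp; ring
  rw [trace_jacobianAt_cdk hcirc hline, det_jacobianAt_cdk hcirc hline, hxk_sq, hy₂]
  constructor <;> field_simp <;> ring
end

section
/- Let a, b > 0 with a > 1 > b, set y₂ = −(b − 1)/(a − b) and let x_k be either of ±√(y₂/a − y₂²). Then the determinant of the Jacobian matrix of the CDK polynomial vector field f_{a,b} at (x_k, y₂) is strictly negative; hence the Jacobian has one strictly positive and one strictly negative real eigenvalue, so s₃ and s₄ are saddle points. -/
theorem det_jacobianAt_cdk_of_stationary {a b x y : ℝ} (hcircle : a * (x ^ 2 + y ^ 2) = y)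
    (hline : b * y - b + 1 = a * y) :
    (jacobianAt (cdk a b) (x, y)).det = 2 * (b - a) * x ^ 2 * y := by
  rw [jacobianAt_cdk, Matrix.det_fin_two_of, hline]
  linear_combination (2 * b * x ^ 2 - (2 * y - b * (x ^ 2 + y ^ 2) - 2 * a * y ^ 2)) * hcircle

theorem exists_pos_neg_add_eq_mul_eq {t d : ℝ} (hd : d < 0) :
    ∃ l₁ l₂ : ℝ, 0 < l₁ ∧ l₂ < 0 ∧ l₁ + l₂ = t ∧ l₁ * l₂ = d := by
  have hdisc : 0 ≤ t ^ 2 - 4 * d := by nlinarith [sq_nonneg t]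
  set s := Real.sqrt (t ^ 2 - 4 * d)
  have hs : s ^ 2 = t ^ 2 - 4 * d := Real.sq_sqrt hdisc
  have hs₀ : 0 ≤ s := Real.sqrt_nonneg _
  -- the two roots of `X² - t X + d`
  refine ⟨(t + s) / 2, (t - s) / 2, ?_, ?_, by ring, by linear_combination -hs / 4⟩
  · nlinarith [sq_nonneg (s + t), sq_nonneg (s - t)]
  · nlinarith [sq_nonneg (s + t), sq_nonneg (s - t)]

/-- for `a > 1 > b`, the Jacobian at `s₃` and `s₄` has negative
determinant, hence one strictly positive and one strictly negative real
eigenvalue: `s₃` and `s₄` are saddle points. -/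
theorem cdk_s34_saddle (a b : ℝ) (ha : 0 < a) (hb : 0 < b)
    (hab : b < 1 ∧ 1 < a)
    (y₂ : ℝ) (hy₂ : y₂ = -(b - 1) / (a - b)) (xk : ℝ)
    (hxk : xk = Real.sqrt (y₂ / a - y₂ ^ 2) ∨ xk = -Real.sqrt (y₂ / a - y₂ ^ 2)) :
    (jacobianAt (cdk a b) (xk, y₂)).det < 0 ∧
      ∃ lam₁ lam₂ : ℝ, 0 < lam₁ ∧ lam₂ < 0 ∧
        lam₁ + lam₂ = (jacobianAt (cdk a b) (xk, y₂)).trace ∧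
        lam₁ * lam₂ = (jacobianAt (cdk a b) (xk, y₂)).det := by
  obtain ⟨hb₁, ha₁⟩ := hab
  have hab : 0 < a - b := by linarith
  have hy₂pos : 0 < y₂ := by rw [hy₂]; exact div_pos (by linarith) hab
  have hline : b * y₂ - b + 1 = a * y₂ := by rw [hy₂]; field_simp; ring
  have hradicand : y₂ / a - y₂ ^ 2 = b * (1 - b) * (a - 1) / (a * (a - b) ^ 2) := by
    rw [hy₂]; field_simp; ring
  have hradicand_pos : 0 < y₂ / a - y₂ ^ 2 := by
    rw [hradicand]
    exact div_pos (mul_pos (mul_pos hb (by linarith)) (by linarith)) (by positivity)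
  have hxk_sq : xk ^ 2 = y₂ / a - y₂ ^ 2 := by
    rcases hxk with rfl | rfl <;> simp [Real.sq_sqrt hradicand_pos.le]
  have hcircle : a * (xk ^ 2 + y₂ ^ 2) = y₂ := by rw [hxk_sq]; field_simp; ring
  have hdet : (jacobianAt (cdk a b) (xk, y₂)).det < 0 := by
    rw [det_jacobianAt_cdk_of_stationary hcircle hline]
    have : 0 < (a - b) * xk ^ 2 * y₂ := by positivity [hxk_sq ▸ hradicand_pos]
    linarith
  exact ⟨hdet, exists_pos_neg_add_eq_mul_eq hdet⟩
end

section
/- For the parameter values a = 5/2 and b = 19/10 and the point (x, y) = (1/10, 9/10), the following two facts hold: (i) x² + y² > max{ 1/a², (2 − b)/b² }, i.e. the point lies strictly outside the circle of radius r = √(max{a⁻², (2−b)/b²}) = 0.4 centred at the origin; (ii) the derivative of the Lyapunov function V(x,y) = x² + y² along the rational CDK vector field is strictly positive at this point, i.e. x·( xy/(x² + y²) − a x ) + y·( y²/(x² + y²) − b y + b − 1 ) > 0. Hence the claim of Aldridge, Davies and Eales that every forward orbit converges into the circle of radius r is false. -/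
theorem cdk_lyapunov_deriv_eq (a b x y : ℝ) (hxy : x ^ 2 + y ^ 2 ≠ 0) :
    x * (x * y / (x ^ 2 + y ^ 2) - a * x) + y * (y ^ 2 / (x ^ 2 + y ^ 2) - b * y + b - 1)
      = b * y * (1 - y) - a * x ^ 2 := by
  field_simp
  ring

/-- for `a = 5/2`, `b = 19/10` and the point `(1/10, 9/10)`:
(i) the point lies strictly outside the circle of radius
`r = √(max{a⁻², (2−b)/b²}) = 0.4` around the origin, and
(ii) the derivative of the Lyapunov function `V = x² + y²` along the rational
CDK vector field is strictly positive there — refuting the claim of Aldridge,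
Davies and Eales. -/
theorem cdk_lyapunov_counterexample :
    let a : ℝ := 5 / 2
    let b : ℝ := 19 / 10
    let x : ℝ := 1 / 10
    let y : ℝ := 9 / 10
    (x ^ 2 + y ^ 2 > max (1 / a ^ 2) ((2 - b) / b ^ 2) ∧
      Real.sqrt (max (1 / a ^ 2) ((2 - b) / b ^ 2)) = 2 / 5) ∧
    0 < x * (x * y / (x ^ 2 + y ^ 2) - a * x)
        + y * (y ^ 2 / (x ^ 2 + y ^ 2) - b * y + b - 1) := by
  intro a b x y
  have hmax : max (1 / a ^ 2) ((2 - b) / b ^ 2) = (2 / 5) ^ 2 := by norm_num [a, b]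
  refine ⟨⟨?_, ?_⟩, ?_⟩
  · rw [hmax]
    norm_num [x, y]
  · rw [hmax, Real.sqrt_sq (by norm_num)]
  · rw [cdk_lyapunov_deriv_eq a b x y (by norm_num [x, y])]
    norm_num [a, b, x, y]
end

section
/- For every y₀ ∈ ℝ, the slope field of Sprott's logarithmic system satisfies lim_{(x,y) → (0, y₀), x ≠ 0} ( (1/2)·ln(x²) + x ) / ( (1/2)·ln(x²) − y ) = 1; i.e., the function (x, y) ↦ ((1/2)ln(x²) + x)/((1/2)ln(x²) − y) tends to 1 as (x, y) tends to (0, y₀) within the set { (x,y) : x ≠ 0 }. Hence the streamlines cross the y-axis with constant slope 1. -/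
open Filter Topology

/-! Near the `y`-axis, `(1/2) ln(x²) = ln |x|` tends to `-∞` while `x` and `y` stay bounded, so
numerator and denominator of the slope are both dominated by the same logarithm. -/

theorem Filter.Tendsto.add_div_sub_of_tendsto_atBot {α 𝕜 : Type*} [Field 𝕜] [LinearOrder 𝕜]
    [IsStrictOrderedRing 𝕜] [TopologicalSpace 𝕜] [OrderTopology 𝕜] {l : Filter α}
    {L u v : α → 𝕜} {a b : 𝕜} (hL : Tendsto L l atBot) (hu : Tendsto u l (𝓝 a))
    (hv : Tendsto v l (𝓝 b)) :
    Tendsto (fun x => (L x + u x) / (L x - v x)) l (𝓝 1) := by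
  have hden : Tendsto (fun x => L x - v x) l atBot := by
    simpa only [sub_eq_add_neg] using hL.atBot_add hv.neg
  have hrest : Tendsto (fun x => 1 + (u x + v x) / (L x - v x)) l (𝓝 1) := by
    simpa using tendsto_const_nhds.add ((hu.add hv).div_atBot hden)
  refine hrest.congr' ?_
  filter_upwards [hden.eventually_lt_atBot 0] with x hx
  field_simp [hx.ne]
  ring

theorem Real.tendsto_half_log_sq_nhdsNE_zero :
    Tendsto (fun x : ℝ => 1 / 2 * Real.log (x ^ 2)) (𝓝[≠] 0) atBot := by
  have h : (fun x : ℝ => 1 / 2 * Real.log (x ^ 2)) = Real.log := by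
    funext x
    rw [Real.log_pow]
    push_cast
    ring
  rw [h]
  exact Real.tendsto_log_nhdsNE_zero

/-- the slope field of Sprott's logarithmic system tends to `1`
as `(x, y) → (0, y₀)` within the set `{x ≠ 0}`: the streamlines cross the
`y`-axis with constant slope `1`. -/
theorem sprott_slope_tendsto_one (y₀ : ℝ) :
    Tendsto
      (fun p : ℝ × ℝ =>
        ((1 / 2) * Real.log (p.1 ^ 2) + p.1) / ((1 / 2) * Real.log (p.1 ^ 2) - p.2))
      (𝓝[{p : ℝ × ℝ | p.1 ≠ 0}] ((0, y₀) : ℝ × ℝ)) (𝓝 1) := by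
  have hfst : Tendsto Prod.fst (𝓝[{p : ℝ × ℝ | p.1 ≠ 0}] ((0, y₀) : ℝ × ℝ)) (𝓝[≠] 0) :=
    continuous_fst.continuousWithinAt.tendsto_nhdsWithin fun _ hp => hp
  exact (Real.tendsto_half_log_sq_nhdsNE_zero.comp hfst).add_div_sub_of_tendsto_atBot
    (tendsto_nhds_of_tendsto_nhdsWithin hfst)
    ((continuous_snd.tendsto ((0, y₀) : ℝ × ℝ)).mono_left nhdsWithin_le_nhds)
end

section
/- Sprott's logarithmic system has exactly one stationary point: there exists a unique pair (x, y) ∈ ℝ² with x ≠ 0 such that (1/2)·ln(x²) − y = 0 and (1/2)·ln(x²) + x = 0; moreover this unique pair satisfies x > 0, x·eˣ = 1 (i.e. x = W(1), the value of the Lambert W function at 1) and y = −x. -/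
/-!
Since `log (x²) / 2 = log x` (Mathlib's `log` is `log |x|`), subtracting the two equations gives
`y = -x`, and `x` must solve `log x + x = 0`. A negative `x` cannot, because
`log x = log (-x) ≤ -x - 1`. For positive `x` the equation is `x eˣ = 1`, and `x eˣ` is strictly
increasing on `[0, ∞)` and runs from `0` to `e` on `[0, 1]`, so it has exactly one positive root.
-/

open Real Set

lemma Real.log_add_self_le_neg_one_of_neg {x : ℝ} (hx : x < 0) : log x + x ≤ -1 := by
  have := log_le_sub_one_of_pos (neg_pos.2 hx)
  rw [log_neg_eq_log] at this
  linarith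

lemma Real.log_add_self_eq_zero_iff {x : ℝ} (hx : x ≠ 0) :
    log x + x = 0 ↔ 0 < x ∧ x * exp x = 1 := by
  constructor
  · intro h
    have hpos : 0 < x := hx.lt_or_gt.resolve_left fun hneg => by
      linarith [log_add_self_le_neg_one_of_neg hneg]
    refine ⟨hpos, ?_⟩
    calc x * exp x = exp (log x + x) := by rw [exp_add, exp_log hpos]
      _ = 1 := by rw [h, exp_zero]
  · rintro ⟨hpos, h⟩
    simpa only [log_mul hpos.ne' (exp_pos x).ne', log_exp, log_one] using congrArg log h

lemma strictMonoOn_mul_exp : StrictMonoOn (fun x : ℝ => x * exp x) (Ici 0) :=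
  fun _ ha _ _ hab => mul_lt_mul hab (exp_le_exp.2 hab.le) (exp_pos _) ((mem_Ici.1 ha).trans hab.le)

lemma existsUnique_pos_mul_exp_eq_one : ∃! x : ℝ, 0 < x ∧ x * exp x = 1 := by
  have hcont : ContinuousOn (fun x : ℝ => x * exp x) (Icc 0 1) := by fun_prop
  have hone : (1 : ℝ) ∈ Icc (0 * exp 0) (1 * exp 1) := by
    simp only [zero_mul, one_mul, mem_Icc, zero_le_one, true_and]
    linarith [add_one_le_exp (1 : ℝ)]
  obtain ⟨x, hx, hx1⟩ := intermediate_value_Icc zero_le_one hcont hone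
  have hpos : 0 < x := hx.1.lt_of_ne <| by rintro rfl; simp at hx1
  refine ⟨x, ⟨hpos, hx1⟩, fun y ⟨hy, hy1⟩ => ?_⟩
  exact strictMonoOn_mul_exp.injOn hy.le hpos.le (hy1.trans hx1.symm)

lemma sprott_stationary_iff (p : ℝ × ℝ) :
    (p.1 ≠ 0 ∧ (1 / 2) * log (p.1 ^ 2) - p.2 = 0 ∧ (1 / 2) * log (p.1 ^ 2) + p.1 = 0) ↔
      (0 < p.1 ∧ p.1 * exp p.1 = 1) ∧ p.2 = -p.1 := by
  have hlog : (1 / 2) * log (p.1 ^ 2) = log p.1 := by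
    rw [log_pow]; push_cast; ring
  rw [hlog]
  constructor
  · rintro ⟨hne, hy, hx⟩
    exact ⟨(log_add_self_eq_zero_iff hne).1 hx, by linarith⟩
  · rintro ⟨hx, hy⟩
    have hx' := (log_add_self_eq_zero_iff hx.1.ne').2 hx
    exact ⟨hx.1.ne', by linarith, hx'⟩

/-- Sprott's logarithmic system has exactly one stationary point
`(x, y)` with `x ≠ 0`; it satisfies `x > 0`, `x·eˣ = 1` (i.e. `x = W(1)`) and
`y = −x`. -/
theorem sprott_unique_stationary_point :
    (∃! p : ℝ × ℝ, p.1 ≠ 0 ∧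
        (1 / 2) * Real.log (p.1 ^ 2) - p.2 = 0 ∧
        (1 / 2) * Real.log (p.1 ^ 2) + p.1 = 0) ∧
    ∀ p : ℝ × ℝ, (p.1 ≠ 0 ∧
        (1 / 2) * Real.log (p.1 ^ 2) - p.2 = 0 ∧
        (1 / 2) * Real.log (p.1 ^ 2) + p.1 = 0) →
      0 < p.1 ∧ p.1 * Real.exp p.1 = 1 ∧ p.2 = -p.1 := by
  simp_rw [sprott_stationary_iff, and_assoc]
  refine ⟨?_, fun _ hp => hp⟩
  obtain ⟨x, hx, hx_unique⟩ := existsUnique_pos_mul_exp_eq_one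
  refine ⟨(x, -x), ⟨hx.1, hx.2, rfl⟩, fun p ⟨hp, hp1, hp2⟩ => ?_⟩
  have hpx : p.1 = x := hx_unique _ ⟨hp, hp1⟩
  exact Prod.ext hpx (by rw [hp2, hpx])
end

section
/- Define h : ℝ² → ℝ² by h(x, y) = ( x²·((1/2)ln(x²) − y), x²·((1/2)ln(x²) + x) ) for x ≠ 0 and h(0, y) = (0, 0). Then h is continuously differentiable (of class C¹) on all of ℝ². (This is the vector field obtained by multiplying the right-hand side of Sprott's logarithmic system by x²; it is defined everywhere in the plane, is C¹, and has the same orbits as the logarithmic system away from the y-axis, so the Poincaré–Bendixson theorem applies to it.) -/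
/-!
Because `Real.log x = log |x|`, we have `(1/2) log (x²) = log x` for every `x`, also at the junk
value `x = 0`; so both components of `sprottPoly` are polynomials plus `x² log x`. That function is
`C¹`: its derivative `2 x log x + x` off the origin extends continuously by `0` to the origin,
since `x log x → 0`.
-/

/-- Sprott's logarithmic vector field multiplied by `x²`, extended by `(0,0)`
to the `y`-axis. -/
noncomputable def sprottPoly : ℝ × ℝ → ℝ × ℝ := fun p =>
  if p.1 = 0 then (0, 0)
  else (p.1 ^ 2 * ((1 / 2) * Real.log (p.1 ^ 2) - p.2),
        p.1 ^ 2 * ((1 / 2) * Real.log (p.1 ^ 2) + p.1))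

open Real

lemma hasDerivAt_sq_mul_log (x : ℝ) :
    HasDerivAt (fun x ↦ x ^ 2 * log x) (2 * (x * log x) + x) x := by
  have hcont : Continuous fun x : ℝ ↦ x ^ 2 * log x :=
    (continuous_id'.fun_mul continuous_mul_log).congr fun y ↦ by ring
  have hderiv : Continuous fun x : ℝ ↦ 2 * (x * log x) + x :=
    (continuous_const.fun_mul continuous_mul_log).fun_add continuous_id'
  refine hasDerivAt_of_hasDerivAt_of_ne' (x := 0) (fun y hy ↦ ?_) hcont.continuousAt
    hderiv.continuousAt x
  refine ((hasDerivAt_pow 2 y).fun_mul (hasDerivAt_log hy)).congr_deriv ?_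
  field_simp
  ring

lemma contDiff_sq_mul_log : ContDiff ℝ 1 fun x : ℝ ↦ x ^ 2 * log x := by
  rw [contDiff_one_iff_deriv]
  refine ⟨fun x ↦ (hasDerivAt_sq_mul_log x).differentiableAt, ?_⟩
  rw [funext fun x ↦ (hasDerivAt_sq_mul_log x).deriv]
  exact (continuous_const.fun_mul continuous_mul_log).fun_add continuous_id'

lemma sprottPoly_eq (p : ℝ × ℝ) :
    sprottPoly p = (p.1 ^ 2 * log p.1 - p.1 ^ 2 * p.2, p.1 ^ 2 * log p.1 + p.1 ^ 2 * p.1) := by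
  rcases eq_or_ne p.1 0 with h | h
  · simp [sprottPoly, h]
  · simp only [sprottPoly, if_neg h, log_pow, Prod.mk.injEq]
    constructor <;> ring

/-- the vector field obtained by multiplying the right-hand side
of Sprott's logarithmic system by `x²` is continuously differentiable on all
of `ℝ²`, so the Poincaré–Bendixson theorem applies to it. -/
theorem sprottPoly_contDiff : ContDiff ℝ 1 sprottPoly := by
  have hlog : ContDiff ℝ 1 fun p : ℝ × ℝ ↦ p.1 ^ 2 * log p.1 :=
    contDiff_sq_mul_log.comp contDiff_fst
  rw [funext sprottPoly_eq]
  exact (hlog.sub ((contDiff_fst.pow 2).mul contDiff_snd)).prodMk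
    (hlog.add ((contDiff_fst.pow 2).mul contDiff_fst))
end
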